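/- arXiv:2111.05699 — 6 statements merged into one kernel-verified Lean document; each statement's English description precedes it below -/
import Mathlib

section
/- Let H = (V, E) be a hypergraph. There exists a matroid M on ground set E whose independent sets are exactly the hyperforests of H; that is, the hyperforests of H form the family of independent sets of a matroid (the hypergraphic matroid of H). -/
open Finset

variable {V α : Type*}

/-- `F[X]`: the subfamily of hyperedges of `F` contained in `X`. -/
def restrict [DecidableEq V] (edge : α → Finset V) (F : Finset α) (X : Finset V) : Finset α :=
  F.filter fun e => edge e ⊆ X

/-- `F` is a hyperforest of the hypergraph `(V, E)` (with hyperedges given by `edge`). -/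
def IsHyperforest [DecidableEq V] (edge : α → Finset V) (E F : Finset α) : Prop :=
  F ⊆ E ∧ ∀ X : Finset V, X.Nonempty → (restrict edge F X).card ≤ X.card - 1

/-- `F` is a hypertree: a hyperforest with `|V| - 1` hyperedges. -/
def IsHypertree [Fintype V] [DecidableEq V] (edge : α → Finset V) (E F : Finset α) : Prop :=
  IsHyperforest edge E F ∧ F.card = Fintype.card V - 1

/-- `Ps` is a family of pairwise disjoint nonempty sets whose union is `S`. -/
def IsPartitionOf [DecidableEq V] (Ps : Finset (Finset V)) (S : Finset V) : Prop :=
  (∀ P ∈ Ps, P.Nonempty) ∧ (∀ P ∈ Ps, ∀ Q ∈ Ps, P ≠ Q → Disjoint P Q) ∧ Ps.sup id = S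

/-- `Ps` is a partition of the vertex set `V` into nonempty parts. -/
def IsPartition [Fintype V] [DecidableEq V] (Ps : Finset (Finset V)) : Prop :=
  IsPartitionOf Ps Finset.univ

/-- `δ_F(Ps)`: hyperedges of `F` contained in the union of the members of `Ps`
and intersecting at least two members of `Ps`. -/
def delta [DecidableEq V] (edge : α → Finset V) (F : Finset α) (Ps : Finset (Finset V)) :
    Finset α :=
  F.filter fun e => edge e ⊆ Ps.sup id ∧
    2 ≤ (Ps.filter fun P => (edge e ∩ P).Nonempty).card

lemma mem_restrict [DecidableEq V] {edge : α → Finset V} {F : Finset α} {X : Finset V}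
    {e : α} : e ∈ restrict edge F X ↔ e ∈ F ∧ edge e ⊆ X := Finset.mem_filter

lemma hf_bound [DecidableEq V] {edge : α → Finset V} {E F : Finset α}
    (hF : IsHyperforest edge E F) {X : Finset V} (hX : X.Nonempty) :
    (restrict edge F X).card + 1 ≤ X.card := by
  have h1 := hF.2 X hX
  have h2 := Finset.card_pos.mpr hX
  omega

lemma hf_subset [DecidableEq V] {edge : α → Finset V} {E F F' : Finset α}
    (hF : IsHyperforest edge E F) (h : F' ⊆ F) : IsHyperforest edge E F' := by
  refine ⟨h.trans hF.1, fun X hX => le_trans ?_ (hF.2 X hX)⟩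
  exact Finset.card_le_card (Finset.filter_subset_filter _ h)

lemma hf_aug [Fintype V] [DecidableEq V] [DecidableEq α]
    (edge : α → Finset V) (E : Finset α) (hE : ∀ e ∈ E, 2 ≤ (edge e).card)
    {I J : Finset α} (hI : IsHyperforest edge E I) (hJ : IsHyperforest edge E J)
    (hlt : I.card < J.card) :
    ∃ e ∈ J, e ∉ I ∧ IsHyperforest edge E (insert e I) := by
  classical
  by_contra hcon
  push_neg at hcon
  set Tight : Finset V → Prop := fun X => X.Nonempty ∧ (restrict edge I X).card + 1 = X.card
    with hTight
  -- every singleton is tight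
  have tight_singleton : ∀ v : V, Tight {v} := by
    intro v
    refine ⟨Finset.singleton_nonempty v, ?_⟩
    have : restrict edge I {v} = ∅ := by
      ext e
      simp only [mem_restrict, Finset.notMem_empty, iff_false, not_and]
      intro heI hsub
      have h2 := hE e (hI.1 heI)
      have := Finset.card_le_card hsub
      simp at this; omega
    simp [this]
  -- tight sets with nonempty intersection have tight union
  have tight_union : ∀ X Y : Finset V, Tight X → Tight Y → (X ∩ Y).Nonempty →
      Tight (X ∪ Y) := by
    intro X Y hX hY hXY
    have hXn : X.Nonempty := hX.1
    have hUn : (X ∪ Y).Nonempty := hXn.mono Finset.subset_union_left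
    have hinter : restrict edge I X ∩ restrict edge I Y = restrict edge I (X ∩ Y) := by
      ext e
      simp only [mem_restrict, Finset.mem_inter, Finset.subset_inter_iff]
      tauto
    have hsub : restrict edge I X ∪ restrict edge I Y ⊆ restrict edge I (X ∪ Y) := by
      intro e he
      simp only [mem_restrict, Finset.mem_union] at he ⊢
      rcases he with ⟨h1, h2⟩ | ⟨h1, h2⟩
      · exact ⟨h1, h2.trans Finset.subset_union_left⟩
      · exact ⟨h1, h2.trans Finset.subset_union_right⟩
    have hcards : (restrict edge I X ∪ restrict edge I Y).card
        + (restrict edge I (X ∩ Y)).card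
        = (restrict edge I X).card + (restrict edge I Y).card := by
      rw [← hinter]; exact Finset.card_union_add_card_inter _ _
    have h1 := hf_bound hI hUn
    have h2 := hf_bound hI hXY
    have h3 : (X ∪ Y).card + (X ∩ Y).card = X.card + Y.card :=
      Finset.card_union_add_card_inter X Y
    have h4 := Finset.card_le_card hsub
    exact ⟨hUn, by omega⟩
  -- maximal tight set containing a vertex
  set T : V → Finset V := fun v => (Finset.univ.filter fun X => Tight X ∧ v ∈ X).sup id
    with hT
  have tight_sup : ∀ (v : V) (S : Finset (Finset V)),
      (∀ X ∈ S, Tight X ∧ v ∈ X) → S.Nonempty → Tight (S.sup id) := by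
    intro v S
    induction S using Finset.induction_on with
    | empty => intro _ h; exact absurd h (by simp)
    | @insert X S hXS ih =>
      intro hall _
      rcases S.eq_empty_or_nonempty with rfl | hSne
      · simpa using (hall X (Finset.mem_insert_self _ _)).1
      · have hS := ih (fun Y hY => hall Y (Finset.mem_insert_of_mem hY)) hSne
        rw [Finset.sup_insert]
        obtain ⟨Y, hY⟩ := hSne
        have hvS : v ∈ S.sup id := by
          have := (hall Y (Finset.mem_insert_of_mem hY)).2
          exact Finset.mem_of_subset (Finset.le_sup (f := id) hY) this
        exact tight_union _ _ (hall X (Finset.mem_insert_self _ _)).1 hS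
          ⟨v, Finset.mem_inter.2 ⟨(hall X (Finset.mem_insert_self _ _)).2, hvS⟩⟩
  have mem_T : ∀ v : V, v ∈ T v := by
    intro v
    have h1 : ({v} : Finset V) ∈ Finset.univ.filter fun X => Tight X ∧ v ∈ X :=
      Finset.mem_filter.2 ⟨Finset.mem_univ _, tight_singleton v, Finset.mem_singleton_self v⟩
    exact Finset.mem_of_subset (Finset.le_sup (f := id) h1) (Finset.mem_singleton_self v)
  have tight_T : ∀ v : V, Tight (T v) := by
    intro v
    refine tight_sup v _ (fun X hX => (Finset.mem_filter.1 hX).2) ?_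
    exact ⟨{v}, Finset.mem_filter.2 ⟨Finset.mem_univ _, tight_singleton v,
        Finset.mem_singleton_self v⟩⟩
  have subset_T : ∀ (v : V) (X : Finset V), Tight X → v ∈ X → X ⊆ T v := by
    intro v X hX hv
    have hmem : X ∈ Finset.univ.filter fun Y => Tight Y ∧ v ∈ Y :=
      Finset.mem_filter.2 ⟨Finset.mem_univ _, hX, hv⟩
    exact Finset.le_sup (f := id) hmem
  have T_eq_or_disj : ∀ v w : V, T v = T w ∨ Disjoint (T v) (T w) := by
    intro v w
    by_cases hd : Disjoint (T v) (T w)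
    · exact Or.inr hd
    left
    rw [Finset.not_disjoint_iff] at hd
    obtain ⟨u, hu1, hu2⟩ := hd
    have htu : Tight (T v ∪ T w) :=
      tight_union _ _ (tight_T v) (tight_T w) ⟨u, Finset.mem_inter.2 ⟨hu1, hu2⟩⟩
    have h1 : T v ∪ T w ⊆ T v :=
      subset_T v _ htu (Finset.mem_union_left _ (mem_T v))
    have h2 : T v ∪ T w ⊆ T w :=
      subset_T w _ htu (Finset.mem_union_right _ (mem_T w))
    exact Finset.Subset.antisymm ((Finset.subset_union_left).trans h2)
      ((Finset.subset_union_right).trans h1)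
  -- for every e in J \ I, its edge lies in a tight set
  have edge_tight : ∀ e ∈ J, e ∉ I → ∃ X : Finset V, Tight X ∧ edge e ⊆ X := by
    intro e heJ heI
    have hnot := hcon e heJ heI
    rw [IsHyperforest] at hnot
    push_neg at hnot
    have hsubE : insert e I ⊆ E := Finset.insert_subset (hJ.1 heJ) hI.1
    obtain ⟨X, hXne, hXcard⟩ := hnot hsubE
    have hXpos := Finset.card_pos.mpr hXne
    by_cases hsub : edge e ⊆ X
    · refine ⟨X, ⟨hXne, ?_⟩, hsub⟩
      have heq : restrict edge (insert e I) X = insert e (restrict edge I X) := by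
        ext f
        simp only [mem_restrict, Finset.mem_insert]
        constructor
        · rintro ⟨rfl | hf, h2⟩
          exacts [Or.inl rfl, Or.inr ⟨hf, h2⟩]
        · rintro (rfl | ⟨h1, h2⟩)
          exacts [⟨Or.inl rfl, hsub⟩, ⟨Or.inr h1, h2⟩]
      rw [heq] at hXcard
      have h1 := Finset.card_insert_le e (restrict edge I X)
      have h2 := hf_bound hI hXne
      omega
    · exfalso
      have heq : restrict edge (insert e I) X = restrict edge I X := by
        ext f
        simp only [mem_restrict, Finset.mem_insert]
        constructor
        · rintro ⟨rfl | hf, h2⟩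
          exacts [absurd h2 hsub, ⟨hf, h2⟩]
        · rintro ⟨h1, h2⟩
          exact ⟨Or.inr h1, h2⟩
      rw [heq] at hXcard
      have := hf_bound hI hXne
      omega
  -- the partition into maximal tight sets
  set Ps : Finset (Finset V) := Finset.univ.image T with hPs
  have Ps_tight : ∀ P ∈ Ps, Tight P := by
    intro P hP
    obtain ⟨v, _, rfl⟩ := Finset.mem_image.1 hP
    exact tight_T v
  have Ps_disj : ∀ P ∈ Ps, ∀ Q ∈ Ps, P ≠ Q → Disjoint P Q := by
    intro P hP Q hQ hne
    obtain ⟨v, _, rfl⟩ := Finset.mem_image.1 hP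
    obtain ⟨w, _, rfl⟩ := Finset.mem_image.1 hQ
    rcases T_eq_or_disj v w with h | h
    · exact absurd h hne
    · exact h
  -- restricts to distinct parts are disjoint
  have restr_disj : ∀ F : Finset α, F ⊆ E → ∀ P ∈ Ps, ∀ Q ∈ Ps, P ≠ Q →
      Disjoint (restrict edge F P) (restrict edge F Q) := by
    intro F hFE P hP Q hQ hne
    rw [Finset.disjoint_left]
    intro e he1 he2
    simp only [mem_restrict] at he1 he2
    have hne' : (edge e).Nonempty := by
      have := hE e (hFE he1.1); exact Finset.card_pos.1 (by omega)
    obtain ⟨v, hv⟩ := hne'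
    exact Finset.disjoint_left.1 (Ps_disj P hP Q hQ hne) (he1.2 hv) (he2.2 hv)
  -- counting
  set Iin : Finset α := Ps.biUnion (fun P => restrict edge I P) with hIin
  set Jin : Finset α := Ps.biUnion (fun P => restrict edge J P) with hJin
  have cardIin : Iin.card = ∑ P ∈ Ps, (restrict edge I P).card :=
    Finset.card_biUnion (restr_disj I hI.1)
  have cardJin : Jin.card = ∑ P ∈ Ps, (restrict edge J P).card :=
    Finset.card_biUnion (restr_disj J hJ.1)
  have hle : Jin.card ≤ Iin.card := by
    rw [cardIin, cardJin]
    refine Finset.sum_le_sum fun P hP => ?_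
    have ht := Ps_tight P hP
    have := hf_bound hJ ht.1
    omega
  have hJinJ : Jin ⊆ J := by
    intro e he
    obtain ⟨P, _, hP⟩ := Finset.mem_biUnion.1 he
    exact (mem_restrict.1 hP).1
  have hIinI : Iin ⊆ I := by
    intro e he
    obtain ⟨P, _, hP⟩ := Finset.mem_biUnion.1 he
    exact (mem_restrict.1 hP).1
  have hcross : J \ Jin ⊆ I \ Iin := by
    intro e he
    rw [Finset.mem_sdiff] at he
    obtain ⟨heJ, heJin⟩ := he
    have hnin : ∀ P ∈ Ps, ¬ edge e ⊆ P := by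
      intro P hP hsub
      exact heJin (Finset.mem_biUnion.2 ⟨P, hP, mem_restrict.2 ⟨heJ, hsub⟩⟩)
    have heI : e ∈ I := by
      by_contra heI
      obtain ⟨X, hX, hsub⟩ := edge_tight e heJ heI
      have hne' : (edge e).Nonempty := by
        have := hE e (hJ.1 heJ); exact Finset.card_pos.1 (by omega)
      obtain ⟨v, hv⟩ := hne'
      have hXT : X ⊆ T v := subset_T v X hX (hsub hv)
      exact hnin (T v) (Finset.mem_image.2 ⟨v, Finset.mem_univ v, rfl⟩) (hsub.trans hXT)
    rw [Finset.mem_sdiff]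
    refine ⟨heI, fun heIin => ?_⟩
    obtain ⟨P, hP, hmem⟩ := Finset.mem_biUnion.1 heIin
    exact hnin P hP (mem_restrict.1 hmem).2
  have h1 : (J \ Jin).card + Jin.card = J.card :=
    Finset.card_sdiff_add_card_eq_card hJinJ
  have h2 : (I \ Iin).card + Iin.card = I.card :=
    Finset.card_sdiff_add_card_eq_card hIinI
  have h3 := Finset.card_le_card hcross
  omega

/-- the hyperforests of a hypergraph are the independent sets of a matroid
on the ground set `E` (the hypergraphic matroid). -/
theorem hypergraphic_matroid_exists [Fintype V] [DecidableEq V] [DecidableEq α]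
    (edge : α → Finset V) (E : Finset α)
    (hV : 1 ≤ Fintype.card V) (hE : ∀ e ∈ E, 2 ≤ (edge e).card) :
    ∃ M : Matroid α, M.E = ↑E ∧
      ∀ I : Set α, M.Indep I ↔ ∃ F : Finset α, ↑F = I ∧ IsHyperforest edge E F := by
  classical
  set Indep : Set α → Prop :=
    fun S => ∃ F : Finset α, ↑F = S ∧ IsHyperforest edge E F with hIndep
  have indep_empty : Indep ∅ := by
    refine ⟨∅, by simp, Finset.empty_subset _, fun X hX => ?_⟩
    have h0 : restrict edge (∅ : Finset α) X = ∅ := Finset.filter_empty _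
    simp [h0]
  have indep_subset : ∀ ⦃I J : Set α⦄, Indep J → I ⊆ J → Indep I := by
    rintro I J ⟨F, rfl, hF⟩ hsub
    refine ⟨F.filter (· ∈ I), ?_, hf_subset hF (Finset.filter_subset _ _)⟩
    ext x
    simp only [Finset.coe_filter, Set.mem_setOf_eq, Finset.mem_coe]
    exact ⟨fun h => h.2, fun h => ⟨hsub h, h⟩⟩
  have indep_aug : ∀ ⦃I J : Set α⦄, Indep I → Indep J → I.ncard < J.ncard →
      ∃ e ∈ J, e ∉ I ∧ Indep (insert e I) := by
    rintro I J ⟨FI, rfl, hFI⟩ ⟨FJ, rfl, hFJ⟩ hlt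
    rw [Set.ncard_coe_finset, Set.ncard_coe_finset] at hlt
    obtain ⟨e, heJ, heI, hfor⟩ := hf_aug edge E hE hFI hFJ hlt
    exact ⟨e, heJ, heI, insert e FI, by simp, hfor⟩
  have subset_ground : ∀ ⦃I : Set α⦄, Indep I → I ⊆ ↑E := by
    rintro I ⟨F, rfl, hF⟩
    exact Finset.coe_subset.2 hF.1
  refine ⟨(IndepMatroid.ofFinite (E.finite_toSet) Indep indep_empty indep_subset
    indep_aug subset_ground).matroid, rfl, fun I => ?_⟩
  rw [IndepMatroid.matroid_indep_iff, IndepMatroid.ofFinite_indep]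
end

section
/- Let H = (V, E) be a hypergraph and let P = { x ∈ ℝ^E : x ≥ 0 and x(δ(𝒫)) ≥ |𝒫| − 1 for every partition 𝒫 of V into nonempty parts }. Then every extreme point of the polyhedron P is an integer-valued vector. -/
open Finset

variable {V α : Type*}

/-!
Partitions of `V` are the equivalence relations on `V`, and `δ(𝒫)` consists of the hyperedges
meeting two classes. On this lattice the number of classes is supermodular (the functions constant
on the classes form a subspace of dimension the number of classes, and dimension is modular),
while `δ` sends meets to unions and joins into intersections. Hence at a feasible `x` the tight
partitions form a sublattice, and the sets `δ(𝒫) ∩ supp x` of tight `𝒫` form a family closed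
under union and intersection. At an extreme point the sums over this family determine every
coordinate on `supp x`. For a lattice family this means that the smallest member containing `e`
exceeds its intersection with the largest member avoiding `e` by exactly `{e}`, so `x e` is a
difference of two integers.
-/

section Convexity

open Filter Topology

theorem eq_zero_of_eventually_add_smul_mem {M : Type*} [AddCommGroup M] [Module ℝ M] {A : Set M}
    {x d : M} (hx : x ∈ A.extremePoints ℝ) (h : ∀ᶠ t in 𝓝 (0 : ℝ), x + t • d ∈ A) : d = 0 := by
  obtain ⟨ε, hε, hball⟩ := Metric.eventually_nhds_iff.1 h
  have hpos : x + (ε / 2) • d ∈ A := hball (by simpa [abs_of_pos hε] using half_lt_self hε)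
  have hneg : x + (-(ε / 2)) • d ∈ A := hball (by simpa [abs_of_pos hε] using half_lt_self hε)
  have hmid : x ∈ openSegment ℝ (x + (ε / 2) • d) (x + (-(ε / 2)) • d) :=
    ⟨1 / 2, 1 / 2, by norm_num, by norm_num, by norm_num, by module⟩
  have := (mem_extremePoints.1 hx).2 _ hpos _ hneg hmid
  simpa [hε.ne'] using this.1

lemma eventually_lt_add_mul {a b : ℝ} (h : b < a) (c : ℝ) : ∀ᶠ t in 𝓝 (0 : ℝ), b < a + t * c := by
  have : Tendsto (fun t : ℝ => a + t * c) (𝓝 0) (𝓝 a) := by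
    simpa using ((tendsto_id (x := 𝓝 (0 : ℝ))).mul_const c).const_add a
  exact this.eventually (lt_mem_nhds h)

variable {ι : Type*}

def coveringPolyhedron (E : Finset α) (A : ι → Finset α) (b : ι → ℝ) : Set (α → ℝ) :=
  {y | (∀ i, i ∉ E → y i = 0) ∧ (∀ i, 0 ≤ y i) ∧ ∀ k, b k ≤ ∑ i ∈ A k, y i}

theorem eventually_add_smul_mem_coveringPolyhedron [Finite ι] {E : Finset α} {A : ι → Finset α}
    {b : ι → ℝ} {x d : α → ℝ} (hx : x ∈ coveringPolyhedron E A b) (hd : ∀ i, x i = 0 → d i = 0)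
    (htight : ∀ k, ∑ i ∈ A k, x i = b k → ∑ i ∈ A k, d i = 0) :
    ∀ᶠ t in 𝓝 (0 : ℝ), x + t • d ∈ coveringPolyhedron E A b := by
  obtain ⟨hxE, hx0, hxb⟩ := hx
  have hnonneg : ∀ᶠ t in 𝓝 (0 : ℝ), ∀ i ∈ E, 0 ≤ x i + t * d i := by
    refine (eventually_all_finset E).2 fun i _ => ?_
    rcases (hx0 i).eq_or_lt with h | h
    · exact .of_forall fun t => by simp [← h, hd i h.symm]
    · exact (eventually_lt_add_mul h _).mono fun t => le_of_lt
  have hcover : ∀ᶠ t in 𝓝 (0 : ℝ), ∀ k, b k ≤ ∑ i ∈ A k, x i + t * ∑ i ∈ A k, d i := by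
    refine eventually_all.2 fun k => ?_
    rcases (hxb k).eq_or_lt with h | h
    · exact .of_forall fun t => by simp [← h, htight k h.symm]
    · exact (eventually_lt_add_mul h _).mono fun t => le_of_lt
  filter_upwards [hnonneg, hcover] with t hnonneg hcover
  refine ⟨fun i hi => by simp [hxE i hi, hd i (hxE i hi)], fun i => ?_, fun k => ?_⟩
  · by_cases hi : i ∈ E
    · exact hnonneg i hi
    · simp [hxE i hi, hd i (hxE i hi)]
  · simpa [Finset.sum_add_distrib, Finset.mul_sum] using hcover k

theorem eq_zero_of_mem_extremePoints_coveringPolyhedron [Finite ι] {E : Finset α}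
    {A : ι → Finset α} {b : ι → ℝ} {x d : α → ℝ}
    (hx : x ∈ (coveringPolyhedron E A b).extremePoints ℝ) (hd : ∀ i, x i = 0 → d i = 0)
    (htight : ∀ k, ∑ i ∈ A k, x i = b k → ∑ i ∈ A k, d i = 0) : d = 0 :=
  eq_zero_of_eventually_add_smul_mem hx (eventually_add_smul_mem_coveringPolyhedron hx.1 hd htight)

end Convexity

theorem exists_int_of_isSublattice [DecidableEq α] {𝒞 : Set (Finset α)} (hfin : 𝒞.Finite)
    (h𝒞 : IsSublattice 𝒞) (hempty : ∅ ∈ 𝒞) {x : α → ℝ}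
    (hx : ∀ C ∈ 𝒞, ∃ n : ℤ, ∑ i ∈ C, x i = n) {e : α}
    (he : ∀ d : α → ℝ, (∀ C ∈ 𝒞, ∑ i ∈ C, d i = 0) → d e = 0) : ∃ n : ℤ, x e = n := by
  set 𝒜 := (hfin.sep (e ∉ ·)).toFinset
  set ℬ := (hfin.sep (e ∈ ·)).toFinset
  have h𝒜 : 𝒜.Nonempty := ⟨∅, by simp [𝒜, hempty]⟩
  have hℬ : ℬ.Nonempty := by
    by_contra hℬ
    have hnot : ∀ C ∈ 𝒞, e ∉ C := fun C hC heC =>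
      hℬ ⟨C, by simp [ℬ, hC, heC]⟩
    simpa using he (Pi.single e 1) fun C hC => by simp [Finset.sum_pi_single', hnot C hC]
  -- `B` is the largest member of `𝒞` avoiding `e`, and `M` the smallest one containing `e`.
  set B := 𝒜.sup' h𝒜 id
  set M := ℬ.inf' hℬ id
  have hB : B ∈ 𝒞 := h𝒞.supClosed.finsetSup'_mem h𝒜 fun C hC => by simp_all [𝒜]
  have hM : M ∈ 𝒞 := h𝒞.infClosed.finsetInf'_mem hℬ fun C hC => by simp_all [ℬ]
  have heB : e ∉ B := by simp [B, Finset.mem_sup', 𝒜]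
  have heM : e ∈ M := by simp [M, Finset.mem_inf', ℬ]
  have hsubB : ∀ C ∈ 𝒞, e ∉ C → C ⊆ B := fun C hC heC =>
    Finset.le_sup' id (by simp [𝒜, hC, heC])
  have hsubM : ∀ C ∈ 𝒞, e ∈ C → M ⊆ C := fun C hC heC =>
    Finset.inf'_le id (by simp [ℬ, hC, heC])
  have hMB : M = insert e (M ∩ B) := by
    refine Finset.Subset.antisymm (fun f hf => ?_) ?_
    · rw [Finset.mem_insert, Finset.mem_inter]
      by_contra! hfe
      have hsep : ∀ C ∈ 𝒞, e ∈ C ↔ f ∈ C := fun C hC =>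
        ⟨fun heC => hsubM C hC heC hf,
          fun hfC => by_contra fun heC => (hfe.2 hf) (hsubB C hC heC hfC)⟩
      have h0 := he (Pi.single e 1 - Pi.single f 1) fun C hC => by
        simp [Finset.sum_sub_distrib, Finset.sum_pi_single', hsep C hC]
      simp [Pi.single_eq_of_ne (Ne.symm hfe.1)] at h0
    · exact Finset.insert_subset heM Finset.inter_subset_left
  obtain ⟨m, hm⟩ := hx M hM
  obtain ⟨n, hn⟩ := hx (M ∩ B) (h𝒞.infClosed hM hB)
  rw [hMB, Finset.sum_insert (by simp [heB]), hn] at hm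
  exact ⟨m - n, by push_cast; linarith⟩

lemma filter_ne_zero_eq_of_subset_of_sum_eq {M : Type*} [AddCommMonoid M] [PartialOrder M]
    [IsOrderedCancelAddMonoid M] [DecidablePred fun m : M => m ≠ 0] {s t : Finset α} {f : α → M}
    (hf : ∀ i ∈ t, 0 ≤ f i) (hst : s ⊆ t) (h : ∑ i ∈ s, f i = ∑ i ∈ t, f i) :
    {i ∈ s | f i ≠ 0} = {i ∈ t | f i ≠ 0} := by
  refine Finset.Subset.antisymm (Finset.filter_subset_filter _ hst) fun i hi => ?_
  rw [Finset.mem_filter] at hi ⊢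
  refine ⟨by_contra fun his => ?_, hi.2⟩
  exact (Finset.sum_lt_sum_of_subset hst hi.1 his ((hf i hi.1).lt_of_ne' hi.2)
    fun j hj _ => hf j hj).ne h

namespace Setoid

variable (K : Type*) [Field K]

noncomputable def liftedFunctions (r : Setoid V) : Submodule K (V → K) :=
  LinearMap.range (LinearMap.funLeft K K (Quotient.mk r))

variable {K}

lemma mem_liftedFunctions {r : Setoid V} {g : V → K} :
    g ∈ liftedFunctions K r ↔ r ≤ ker g := by
  constructor
  · rintro ⟨f, rfl⟩ v w h
    exact congrArg f (Quotient.sound h)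
  · exact fun h => ⟨Quotient.lift g fun _ _ hvw => h hvw, rfl⟩

lemma finrank_liftedFunctions [Finite V] (r : Setoid V) :
    Module.finrank K (liftedFunctions K r) = Nat.card (Quotient r) := by
  have := Fintype.ofFinite (Quotient r)
  rw [liftedFunctions, LinearMap.finrank_range_of_inj
    (LinearMap.funLeft_injective_of_surjective K K _ Quotient.mk_surjective),
    Module.finrank_fintype_fun_eq_card, Nat.card_eq_fintype_card]

lemma liftedFunctions_sup (r s : Setoid V) :
    liftedFunctions K (r ⊔ s) = liftedFunctions K r ⊓ liftedFunctions K s := by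
  ext g
  simp only [Submodule.mem_inf, mem_liftedFunctions, sup_le_iff]

lemma sup_liftedFunctions_le (r s : Setoid V) :
    liftedFunctions K r ⊔ liftedFunctions K s ≤ liftedFunctions K (r ⊓ s) :=
  sup_le (fun _ hg => mem_liftedFunctions.2 (inf_le_left.trans (mem_liftedFunctions.1 hg)))
    (fun _ hg => mem_liftedFunctions.2 (inf_le_right.trans (mem_liftedFunctions.1 hg)))

theorem card_quotient_add_card_quotient_le [Finite V] (r s : Setoid V) :
    Nat.card (Quotient r) + Nat.card (Quotient s) ≤
      Nat.card (Quotient (r ⊓ s)) + Nat.card (Quotient (r ⊔ s)) := by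
  have hdim := Submodule.finrank_sup_add_finrank_inf_eq (liftedFunctions ℚ r) (liftedFunctions ℚ s)
  have hle := Submodule.finrank_mono (sup_liftedFunctions_le (K := ℚ) r s)
  rw [← liftedFunctions_sup] at hdim
  simp only [finrank_liftedFunctions] at hdim hle
  omega

lemma card_quotient_top [Nonempty V] : Nat.card (Quotient (⊤ : Setoid V)) = 1 :=
  have : Subsingleton (Quotient (⊤ : Setoid V)) := Quotient.subsingleton_iff.2 rfl
  Nat.card_of_subsingleton (Quotient.mk _ (Classical.arbitrary V))

instance [Finite V] : Finite (Setoid V) :=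
  Finite.of_injective (fun r : Setoid V => ⇑r) fun _ _ h =>
    Setoid.ext fun a b => Iff.of_eq (congrFun₂ h a b)

end Setoid

section CrossEdges

variable (edge : α → Finset V) (E : Finset α)

open Classical in
noncomputable def crossEdges (r : Setoid V) : Finset α :=
  {e ∈ E | ∃ v ∈ edge e, ∃ w ∈ edge e, ¬ r v w}

lemma mem_crossEdges {r : Setoid V} {e : α} :
    e ∈ crossEdges edge E r ↔ e ∈ E ∧ ∃ v ∈ edge e, ∃ w ∈ edge e, ¬ r v w := by
  simp [crossEdges]

lemma crossEdges_antitone : Antitone (crossEdges edge E) := fun r s hrs e he => by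
  obtain ⟨heE, v, hv, w, hw, hvw⟩ := (mem_crossEdges edge E).1 he
  exact (mem_crossEdges edge E).2 ⟨heE, v, hv, w, hw, fun h => hvw (hrs h)⟩

lemma crossEdges_inf [DecidableEq α] (r s : Setoid V) :
    crossEdges edge E (r ⊓ s) = crossEdges edge E r ∪ crossEdges edge E s := by
  refine Finset.Subset.antisymm (fun e he => ?_) (Finset.union_subset
    (crossEdges_antitone edge E inf_le_left) (crossEdges_antitone edge E inf_le_right))
  obtain ⟨heE, v, hv, w, hw, hvw⟩ := (mem_crossEdges edge E).1 he
  rcases not_and_or.1 hvw with hr | hs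
  · exact Finset.mem_union_left _ ((mem_crossEdges edge E).2 ⟨heE, v, hv, w, hw, hr⟩)
  · exact Finset.mem_union_right _ ((mem_crossEdges edge E).2 ⟨heE, v, hv, w, hw, hs⟩)

@[simp]
lemma crossEdges_top : crossEdges edge E ⊤ = ∅ := by
  ext e
  simp [mem_crossEdges]

def tightSetoids (x : α → ℝ) : Set (Setoid V) :=
  {r | ∑ e ∈ crossEdges edge E r, x e = (Nat.card (Quotient r) : ℝ) - 1}

lemma mem_tightSetoids {x : α → ℝ} {r : Setoid V} :
    r ∈ tightSetoids edge E x ↔ ∑ e ∈ crossEdges edge E r, x e = (Nat.card (Quotient r) : ℝ) - 1 :=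
  Iff.rfl

variable {edge E} [Finite V] [DecidableEq α] {x : α → ℝ}

theorem tightSetoids_uncross (hx0 : ∀ i, 0 ≤ x i)
    (hfeas : ∀ r : Setoid V, (Nat.card (Quotient r) : ℝ) - 1 ≤ ∑ e ∈ crossEdges edge E r, x e)
    {r s : Setoid V} (hr : r ∈ tightSetoids edge E x) (hs : s ∈ tightSetoids edge E x) :
    r ⊓ s ∈ tightSetoids edge E x ∧ r ⊔ s ∈ tightSetoids edge E x ∧
      ∑ e ∈ crossEdges edge E (r ⊔ s), x e =
        ∑ e ∈ crossEdges edge E r ∩ crossEdges edge E s, x e := by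
  have hsup : ∑ e ∈ crossEdges edge E (r ⊔ s), x e ≤
      ∑ e ∈ crossEdges edge E r ∩ crossEdges edge E s, x e :=
    Finset.sum_le_sum_of_subset_of_nonneg (Finset.subset_inter
      (crossEdges_antitone edge E le_sup_left) (crossEdges_antitone edge E le_sup_right))
      fun i _ _ => hx0 i
  have hcount : (Nat.card (Quotient r) : ℝ) + Nat.card (Quotient s) ≤
      Nat.card (Quotient (r ⊓ s)) + Nat.card (Quotient (r ⊔ s)) := by
    exact_mod_cast Setoid.card_quotient_add_card_quotient_le r s
  have hunion := Finset.sum_union_inter (s₁ := crossEdges edge E r)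
    (s₂ := crossEdges edge E s) (f := x)
  have hinf := hfeas (r ⊓ s)
  have hsup' := hfeas (r ⊔ s)
  rw [crossEdges_inf] at hinf
  simp only [mem_tightSetoids, crossEdges_inf] at hr hs ⊢
  refine ⟨?_, ?_, ?_⟩ <;> linarith

theorem isSublattice_image_tightSetoids (hx0 : ∀ i, 0 ≤ x i)
    (hfeas : ∀ r : Setoid V, (Nat.card (Quotient r) : ℝ) - 1 ≤ ∑ e ∈ crossEdges edge E r, x e) :
    IsSublattice ((fun r => {e ∈ crossEdges edge E r | x e ≠ 0}) '' tightSetoids edge E x) where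
  supClosed := by
    rintro _ ⟨r, hr, rfl⟩ _ ⟨s, hs, rfl⟩
    refine ⟨r ⊓ s, (tightSetoids_uncross hx0 hfeas hr hs).1, ?_⟩
    simp only [crossEdges_inf, Finset.filter_union, Finset.sup_eq_union]
  infClosed := by
    rintro _ ⟨r, hr, rfl⟩ _ ⟨s, hs, rfl⟩
    obtain ⟨-, hsup, hsum⟩ := tightSetoids_uncross hx0 hfeas hr hs
    refine ⟨r ⊔ s, hsup, ?_⟩
    rw [Finset.inf_eq_inter, ← Finset.filter_inter_distrib]
    exact filter_ne_zero_eq_of_subset_of_sum_eq (fun i _ => hx0 i) (Finset.subset_inter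
      (crossEdges_antitone edge E le_sup_left) (crossEdges_antitone edge E le_sup_right)) hsum

end CrossEdges

section Partitions

variable [DecidableEq V]

def partitionSetoid (Ps : Finset (Finset V)) : Setoid V :=
  Setoid.ker fun v => {A ∈ Ps | v ∈ A}

lemma IsPartitionOf.eq_of_mem_of_mem {Ps : Finset (Finset V)} {S : Finset V}
    (h : IsPartitionOf Ps S) {A B : Finset V} {v : V} (hA : A ∈ Ps) (hB : B ∈ Ps)
    (hvA : v ∈ A) (hvB : v ∈ B) : A = B :=
  by_contra fun hAB => Finset.disjoint_left.1 (h.2.1 A hA B hB hAB) hvA hvB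

lemma IsPartitionOf.filter_mem_eq_singleton {Ps : Finset (Finset V)} {S : Finset V}
    (h : IsPartitionOf Ps S) {A : Finset V} {v : V} (hA : A ∈ Ps) (hvA : v ∈ A) :
    {B ∈ Ps | v ∈ B} = {A} := by
  ext B
  simp only [Finset.mem_filter, Finset.mem_singleton]
  exact ⟨fun hB => (h.eq_of_mem_of_mem hA hB.1 hvA hB.2).symm, by rintro rfl; exact ⟨hA, hvA⟩⟩

variable [Fintype V]

lemma IsPartition.exists_mem {Ps : Finset (Finset V)} (h : IsPartition Ps) (v : V) :
    ∃ A ∈ Ps, v ∈ A := by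
  simpa using (h.2.2.symm ▸ Finset.mem_univ v : v ∈ Ps.sup id)

lemma IsPartition.partitionSetoid_iff {Ps : Finset (Finset V)} (h : IsPartition Ps)
    {A : Finset V} {v w : V} (hA : A ∈ Ps) (hvA : v ∈ A) : partitionSetoid Ps v w ↔ w ∈ A := by
  obtain ⟨B, hB, hwB⟩ := h.exists_mem w
  rw [partitionSetoid, Setoid.ker_def, h.filter_mem_eq_singleton hA hvA,
    h.filter_mem_eq_singleton hB hwB, Finset.singleton_inj]
  exact ⟨fun hAB => hAB ▸ hwB, fun hwA => h.eq_of_mem_of_mem hA hB hwA hwB⟩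

lemma card_quotient_partitionSetoid {Ps : Finset (Finset V)} (h : IsPartition Ps) :
    Nat.card (Quotient (partitionSetoid Ps)) = Ps.card := by
  have hrange :
      Set.range (fun v => {A ∈ Ps | v ∈ A}) = (fun A => {A}) '' (Ps : Set (Finset V)) := by
    ext C
    constructor
    · rintro ⟨v, rfl⟩
      obtain ⟨A, hA, hvA⟩ := h.exists_mem v
      exact ⟨A, hA, (h.filter_mem_eq_singleton hA hvA).symm⟩
    · rintro ⟨A, hA, rfl⟩
      obtain ⟨v, hvA⟩ := h.1 A hA
      exact ⟨v, h.filter_mem_eq_singleton hA hvA⟩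
  rw [partitionSetoid, Nat.card_congr (Setoid.quotientKerEquivRange _), hrange,
    Nat.card_image_of_injective Finset.singleton_injective, Nat.card_coe_set_eq,
    Set.ncard_coe_finset]

lemma crossEdges_partitionSetoid (edge : α → Finset V) (E : Finset α)
    {Ps : Finset (Finset V)} (h : IsPartition Ps) :
    crossEdges edge E (partitionSetoid Ps) = delta edge E Ps := by
  ext e
  rw [mem_crossEdges, delta, Finset.mem_filter, h.2.2]
  simp only [Finset.subset_univ, true_and]
  refine and_congr_right fun _ => ⟨?_, fun h2 => ?_⟩
  · rintro ⟨v, hv, w, hw, hvw⟩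
    obtain ⟨A, hA, hvA⟩ := h.exists_mem v
    obtain ⟨B, hB, hwB⟩ := h.exists_mem w
    refine Finset.one_lt_card.2 ⟨A, ?_, B, ?_, ?_⟩
    · exact Finset.mem_filter.2 ⟨hA, v, Finset.mem_inter.2 ⟨hv, hvA⟩⟩
    · exact Finset.mem_filter.2 ⟨hB, w, Finset.mem_inter.2 ⟨hw, hwB⟩⟩
    · rintro rfl
      exact hvw ((h.partitionSetoid_iff hA hvA).2 hwB)
  · obtain ⟨A, hA, B, hB, hAB⟩ := Finset.one_lt_card.1 h2
    rw [Finset.mem_filter] at hA hB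
    obtain ⟨v, hv⟩ := hA.2
    obtain ⟨w, hw⟩ := hB.2
    rw [Finset.mem_inter] at hv hw
    refine ⟨v, hv.1, w, hw.1, fun hvw => hAB ?_⟩
    exact h.eq_of_mem_of_mem hA.1 hB.1 ((h.partitionSetoid_iff hA.1 hv.2).1 hvw) hw.2

lemma isPartition_parts (P : Finpartition (Finset.univ : Finset V)) : IsPartition P.parts :=
  ⟨fun _ hA => Finset.nonempty_iff_ne_empty.2 (P.ne_bot hA),
    fun _ hA _ hB hAB => P.disjoint hA hB hAB, P.sup_parts⟩

lemma partitionSetoid_ofSetoid (r : Setoid V) [DecidableRel r] :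
    partitionSetoid (Finpartition.ofSetoid r).parts = r := by
  ext v w
  rw [(isPartition_parts _).partitionSetoid_iff ((Finpartition.ofSetoid r).part_mem.2
    (Finset.mem_univ v)) ((Finpartition.ofSetoid r).mem_part (Finset.mem_univ v)),
    Finpartition.mem_part_ofSetoid_iff_rel]

theorem forall_isPartition_iff_forall_setoid (edge : α → Finset V) (E : Finset α) (y : α → ℝ) :
    (∀ Ps : Finset (Finset V), IsPartition Ps → (Ps.card : ℝ) - 1 ≤ ∑ e ∈ delta edge E Ps, y e) ↔
      ∀ r : Setoid V, (Nat.card (Quotient r) : ℝ) - 1 ≤ ∑ e ∈ crossEdges edge E r, y e := by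
  classical
  refine ⟨fun hP r => ?_, fun hS Ps hPs => ?_⟩
  · have hpart := isPartition_parts (Finpartition.ofSetoid r)
    rw [← partitionSetoid_ofSetoid r, card_quotient_partitionSetoid hpart,
      crossEdges_partitionSetoid edge E hpart]
    exact hP _ hpart
  · rw [← card_quotient_partitionSetoid hPs, ← crossEdges_partitionSetoid edge E hPs]
    exact hS _

theorem partitionPolyhedron_eq_coveringPolyhedron (edge : α → Finset V) (E : Finset α) :
    {x : α → ℝ | (∀ e, e ∉ E → x e = 0) ∧ (∀ e, 0 ≤ x e) ∧
        ∀ Ps : Finset (Finset V), IsPartition Ps →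
          (Ps.card : ℝ) - 1 ≤ ∑ e ∈ delta edge E Ps, x e} =
      coveringPolyhedron E (crossEdges edge E) fun r => (Nat.card (Quotient r) : ℝ) - 1 :=
  Set.ext fun y =>
    and_congr_right' (and_congr_right' (forall_isPartition_iff_forall_setoid edge E y))

end Partitions

theorem partition_polyhedron_integral_general [Fintype V] [DecidableEq V] [DecidableEq α]
    (edge : α → Finset V) (E : Finset α)
    (hV : 1 ≤ Fintype.card V) :
    ∀ x ∈ Set.extremePoints ℝ {x : α → ℝ |
        (∀ e, e ∉ E → x e = 0) ∧ (∀ e, 0 ≤ x e) ∧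
        ∀ Ps : Finset (Finset V), IsPartition Ps →
          (Ps.card : ℝ) - 1 ≤ ∑ e ∈ delta edge E Ps, x e},
      ∀ e : α, ∃ n : ℤ, x e = n := by
  intro x hx e
  rw [partitionPolyhedron_eq_coveringPolyhedron] at hx
  obtain ⟨-, hx0, hfeas⟩ := hx.1
  by_cases hxe : x e = 0
  · exact ⟨0, by simp [hxe]⟩
  have : Nonempty V := Fintype.card_pos_iff.1 hV
  refine exists_int_of_isSublattice (Set.toFinite _) (isSublattice_image_tightSetoids hx0 hfeas)
    ⟨⊤, by simp [mem_tightSetoids, Setoid.card_quotient_top], by simp⟩ ?_ fun d hd => ?_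
  · rintro _ ⟨r, hr, rfl⟩
    rw [mem_tightSetoids] at hr
    exact ⟨Nat.card (Quotient r) - 1, by simpa [Finset.sum_filter_ne_zero] using hr⟩
  · have hd' := eq_zero_of_mem_extremePoints_coveringPolyhedron hx
      (d := fun i => if x i ≠ 0 then d i else 0) (fun i hi => by simp [hi])
      fun r hr => by rw [← Finset.sum_filter]; exact hd _ ⟨r, hr, rfl⟩
    simpa [hxe] using congrFun hd' e

/-- every extreme point of the polyhedron
`P = { x ∈ ℝ^E : x ≥ 0, x(δ(Ps)) ≥ |Ps| - 1 for every partition Ps of V }`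
is integer valued. -/
theorem partition_polyhedron_integral [Fintype V] [DecidableEq V] [DecidableEq α]
    (edge : α → Finset V) (E : Finset α)
    (hV : 1 ≤ Fintype.card V) (hE : ∀ e ∈ E, 2 ≤ (edge e).card) :
    ∀ x ∈ Set.extremePoints ℝ {x : α → ℝ |
        (∀ e, e ∉ E → x e = 0) ∧ (∀ e, 0 ≤ x e) ∧
        ∀ Ps : Finset (Finset V), IsPartition Ps →
          (Ps.card : ℝ) - 1 ≤ ∑ e ∈ delta edge E Ps, x e},
      ∀ e : α, ∃ n : ℤ, x e = n :=
  partition_polyhedron_integral_general edge E hV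
end

section
/- Let H = (V, E) be a hypergraph and let k be a positive integer. Then E can be partitioned into k pairwise disjoint hyperforests if and only if |E[X]| ≤ k(|X| − 1) for every nonempty X ⊆ V. -/
open Finset

variable {V α : Type*}

/-!
Hyperforests are the independent sets of a matroid on the hyperedges. If `F` is a hyperforest
and `F + a` is not, then `edge a` lies in a tight set `X`, one with `|F[X]| = |X| - 1`; by
submodularity of `X ↦ |F[X]|`, tight sets that meet have a tight union, so the maximal tight sets
are disjoint. Counting hyperedges inside and outside the maximal tight sets of a hyperforest `B`
that every other member of a family `A` depends on gives `|A| ≤ k |B|` as soon as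
`|A[X]| ≤ k (|X| - 1)` for all `X`. With `A` another hyperforest and `k = 1` this is the
augmentation axiom; with `A ⊆ E` and `B` a basis of `A` it is `|A| ≤ k r(A)`.

Edmonds' matroid partition theorem then splits `E` into `k` independent sets. Elements are added
one at a time: `x` replaces some `b₁` in its class, `b₁` replaces `b₂`, and so on until an element
can simply be added to a class. Along a shortest such path every exchange stays independent. If
there is no path, every class meets the set `A` of elements reachable from `x` in a basis of `A`,
so `k r(A)` counts the elements of `A` other than `x`, contradicting `|A| ≤ k r(A)`.
-/

lemma preimage_some_update_of_eq_none {ι : Type*} [DecidableEq α] [DecidableEq ι]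
    {c : α → Option ι} {x : α} (hx : c x = none) (i j : ι) :
    Function.update c x (some i) ⁻¹' {some j} =
      Function.update (fun j ↦ c ⁻¹' {some j}) i (insert x (c ⁻¹' {some i})) j := by
  ext a
  obtain rfl | hji := eq_or_ne j i <;> by_cases hax : a = x <;> simp_all [Ne.symm]

lemma preimage_some_update_none {ι : Type*} [DecidableEq α] [DecidableEq ι]
    {c : α → Option ι} {b : α} {i : ι} (hb : c b = some i) (j : ι) :
    Function.update c b none ⁻¹' {some j} =
      Function.update (fun j ↦ c ⁻¹' {some j}) i (c ⁻¹' {some i} \ {b}) j := by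
  ext a
  obtain rfl | hji := eq_or_ne j i <;> by_cases hab : a = b <;> simp_all [Ne.symm]

namespace Matroid

variable {ι : Type*} {M : Matroid α}

lemma Indep.insert_indep_of_subset_closure {I X : Set α} {e : α} (hI : M.Indep I)
    (hIX : I ⊆ M.closure X) (he : e ∈ M.E \ M.closure X) : M.Indep (insert e I) :=
  hI.insert_indep_iff.2 <| .inl
    ⟨he.1, fun h ↦ he.2 (M.closure_subset_closure_of_subset_closure hIX h)⟩

def IsExchangeArc (M : Matroid α) (I : ι → Set α) (a b : α) : Prop :=
  ∃ i, b ∈ I i ∧ a ∉ I i ∧ M.Indep (insert a (I i \ {b}))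

def IsAddable (M : Matroid α) (I : ι → Set α) (a : α) : Prop :=
  ∃ i, a ∉ I i ∧ M.Indep (insert a (I i))

def ReachesAddableIn (M : Matroid α) (I : ι → Set α) : ℕ → α → Prop
  | 0, a => M.IsAddable I a
  | n + 1, a => ∃ b, M.IsExchangeArc I a b ∧ M.ReachesAddableIn I n b

lemma exists_reachesAddableIn_of_reflTransGen {I : ι → Set α} {x a : α}
    (hxa : Relation.ReflTransGen (M.IsExchangeArc I) x a) (ha : M.IsAddable I a) :
    ∃ n, M.ReachesAddableIn I n x := by
  induction hxa using Relation.ReflTransGen.head_induction_on with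
  | refl => exact ⟨0, ha⟩
  | head hxb _ ih =>
    obtain ⟨n, hn⟩ := ih
    exact ⟨n + 1, _, hxb, hn⟩

/-- An arc or an addable end that the exchange of `b` for `x` could spoil would give `x` a path
shorter than `n + 1`. -/
lemma ReachesAddableIn.update_exchange [DecidableEq ι] {I : ι → Set α} {i : ι} {x b : α}
    {n l : ℕ} {a : α} (hI : M.Indep (I i)) (hb : b ∈ I i) (hx : x ∉ I i)
    (hxb : M.Indep (insert x (I i \ {b}))) (hmin : ∀ m ≤ n, ¬ M.ReachesAddableIn I m x)
    (hl : l ≤ n) (ha : M.ReachesAddableIn I l a) :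
    M.ReachesAddableIn (Function.update I i (insert x (I i \ {b}))) l a := by
  have hxE : x ∈ M.E := hxb.subset_ground (Set.mem_insert x _)
  induction l generalizing a with
  | zero =>
    obtain ⟨j, haj, hind⟩ := ha
    obtain rfl | hji := eq_or_ne j i
    · have hax : a ≠ x := by rintro rfl; exact hmin 0 n.zero_le ⟨j, haj, hind⟩
      have hxcl : x ∈ M.closure (I j) :=
        hI.mem_closure_iff'.2 ⟨hxE, fun h ↦ (hmin 0 n.zero_le ⟨j, hx, h⟩).elim⟩
      refine ⟨j, by simp [haj, hax], ?_⟩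
      rw [Function.update_self]
      exact hxb.insert_indep_of_subset_closure
        (Set.insert_subset hxcl (Set.sdiff_subset.trans (M.subset_closure (I j))))
        ((hI.insert_indep_iff_of_notMem haj).1 hind)
    · exact ⟨j, by simpa [Function.update_of_ne hji] using And.intro haj hind⟩
  | succ l ih =>
    obtain ⟨e, ⟨j, hej, haj, hind⟩, he⟩ := ha
    refine ⟨e, ?_, ih (by omega) he⟩
    obtain rfl | hji := eq_or_ne j i
    · have hax : a ≠ x := by rintro rfl; exact hmin _ hl ⟨e, ⟨j, hej, haj, hind⟩, he⟩
      have heb : e ≠ b := by rintro rfl; exact hmin _ hl ⟨e, ⟨j, hb, hx, hxb⟩, he⟩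
      have hIe : M.Indep (I j \ {e}) := hI.sdiff _
      have hxcl : x ∈ M.closure (I j \ {e}) :=
        hIe.mem_closure_iff'.2 ⟨hxE, fun h ↦ (hmin _ hl ⟨e, ⟨j, hej, hx, h⟩, he⟩).elim⟩
      have hacl : a ∈ M.E \ M.closure (I j \ {e}) :=
        (hIe.insert_indep_iff_of_notMem fun h ↦ haj h.1).1 hind
      refine ⟨j, by simp [hej, heb], by simp [haj, hax], ?_⟩
      rw [Function.update_self]
      refine (hxb.sdiff {e}).insert_indep_of_subset_closure ?_ hacl
      rintro y ⟨rfl | ⟨hy, -⟩, hye⟩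
      · exact hxcl
      · exact M.subset_closure _ hIe.subset_ground ⟨hy, hye⟩
    · exact ⟨j, by simpa [Function.update_of_ne hji] using And.intro hej (And.intro haj hind)⟩

/-- The classes `c ⁻¹' {some i}` of a partial colouring `c` are disjoint by construction; the
elements sent to `none` are the ones not yet placed. -/
lemma exists_extend_coloring_of_reachesAddableIn {n : ℕ} :
    ∀ {c : α → Option ι} {x : α}, (∀ i, M.Indep (c ⁻¹' {some i})) → c x = none →
      M.ReachesAddableIn (fun i ↦ c ⁻¹' {some i}) n x →
      ∃ c' : α → Option ι, (∀ i, M.Indep (c' ⁻¹' {some i})) ∧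
        ∀ a, c' a ≠ none ↔ a = x ∨ c a ≠ none := by
  classical
  induction n using Nat.strong_induction_on with
  | _ n ih =>
  intro c x hc hx hn
  by_cases hshorter : ∃ m < n, M.ReachesAddableIn (fun i ↦ c ⁻¹' {some i}) m x
  · obtain ⟨m, hm, hm'⟩ := hshorter
    exact ih m hm hc hx hm'
  push Not at hshorter
  cases n with
  | zero =>
    obtain ⟨i, -, hind⟩ := hn
    refine ⟨Function.update c x (some i), fun j ↦ ?_, fun a ↦ ?_⟩
    · rw [preimage_some_update_of_eq_none hx]
      exact (Function.forall_update_iff _ fun _ ↦ M.Indep).2 ⟨hind, fun j _ ↦ hc j⟩ j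
    · by_cases hax : a = x <;> simp [hax]
  | succ m =>
    obtain ⟨b, ⟨i, hbi, hxi, hind⟩, hb⟩ := hn
    have hbx : b ≠ x := by rintro rfl; simp_all
    set c' := Function.update (Function.update c b none) x (some i)
    have hclasses : (fun j ↦ c' ⁻¹' {some j}) =
        Function.update (fun j ↦ c ⁻¹' {some j}) i (insert x (c ⁻¹' {some i} \ {b})) := by
      funext j
      rw [preimage_some_update_of_eq_none (by simpa [hbx.symm] using hx),
        preimage_some_update_none hbi i, Function.update_self,
        funext (preimage_some_update_none hbi), Function.update_idem]
    have hc' : ∀ j, M.Indep ((fun j ↦ c' ⁻¹' {some j}) j) := by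
      rw [hclasses]
      exact (Function.forall_update_iff _ fun _ ↦ M.Indep).2 ⟨hind, fun j _ ↦ hc j⟩
    have hb' : M.ReachesAddableIn (fun j ↦ c' ⁻¹' {some j}) m b := by
      rw [hclasses]
      exact hb.update_exchange (hc i) hbi hxi hind
        (fun l hl ↦ hshorter l (Nat.lt_succ_of_le hl)) le_rfl
    obtain ⟨c'', hc'', hcol⟩ := ih m (Nat.lt_succ_self m) hc' (by simp [c', hbx]) hb'
    refine ⟨c'', hc'', fun a ↦ ?_⟩
    rw [hcol]
    by_cases hax : a = x <;> by_cases hab : a = b <;> simp_all [c']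

lemma isBasis_inter_of_isExchangeArc_closed {I : ι → Set α} {A : Set α}
    (hI : ∀ i, M.Indep (I i)) (hA : A ⊆ M.E)
    (hclosed : ∀ a ∈ A, ∀ b, M.IsExchangeArc I a b → b ∈ A)
    (hnot : ∀ a ∈ A, ¬ M.IsAddable I a) (i : ι) : M.IsBasis (I i ∩ A) A := by
  refine ((hI i).subset Set.inter_subset_left).isBasis_of_subset_of_subset_closure
    Set.inter_subset_right fun a ha ↦ ?_
  by_cases hai : a ∈ I i
  · exact M.subset_closure _ ((hI i).subset_ground.trans' Set.inter_subset_left) ⟨hai, ha⟩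
  have hcl : a ∈ M.closure (I i) :=
    (hI i).mem_closure_iff'.2 ⟨hA ha, fun h ↦ (hnot a ha ⟨i, hai, h⟩).elim⟩
  have hC := (hI i).fundCircuit_isCircuit hcl hai
  refine M.closure_subset_closure ?_ (hC.mem_closure_sdiff_singleton_of_mem (M.mem_fundCircuit a _))
  rintro b ⟨hbC, hba : b ≠ a⟩
  have hbI : b ∈ I i := ((M.fundCircuit_subset_insert a (I i)) hbC).resolve_left hba
  have hexch := ((hI i).mem_fundCircuit_iff hcl hai).1 hbC
  rw [← Set.insert_sdiff_singleton_comm hba.symm] at hexch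
  exact ⟨hbI, hclosed a ha b ⟨i, hbI, hai, hexch⟩⟩

/-- Each class meets the set `A` of elements reachable from `x` in a basis of `A`, so
`|ι| r(A) = ∑ i, |A ∩ c ⁻¹' {some i}|` misses at least `x`. -/
lemma exists_eRk_lt_of_forall_not_reachesAddableIn [Fintype ι] {c : α → Option ι}
    (hc : ∀ i, M.Indep (c ⁻¹' {some i})) {E : Finset α} (hE : (E : Set α) ⊆ M.E)
    (hcE : ∀ a, c a ≠ none → a ∈ E) {x : α} (hxE : x ∈ E) (hx : c x = none)
    (hreach : ∀ n, ¬ M.ReachesAddableIn (fun i ↦ c ⁻¹' {some i}) n x) :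
    ∃ S ⊆ E, Fintype.card ι * M.eRk S < S.card := by
  classical
  set I : ι → Set α := fun i ↦ c ⁻¹' {some i}
  set A := E.filter (Relation.ReflTransGen (M.IsExchangeArc I) x)
  have hbasis : ∀ i, M.IsBasis (I i ∩ A) A := by
    refine isBasis_inter_of_isExchangeArc_closed hc ((coe_subset.2 (filter_subset _ _)).trans hE)
      (fun a ha b hab ↦ ?_) fun a ha hadd ↦ ?_
    · obtain ⟨i, hbi, hab⟩ := hab
      exact mem_filter.2 ⟨hcE b (by simp_all [I]), (mem_filter.1 ha).2.tail ⟨i, hbi, hab⟩⟩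
    · obtain ⟨n, hn⟩ := exists_reachesAddableIn_of_reflTransGen (mem_filter.1 ha).2 hadd
      exact hreach n hn
  have hrk : ∀ i, M.eRk A = (A.filter (c · = some i)).card := fun i ↦ by
    rw [(hbasis i).isBasis'.eRk_eq_encard, ← Set.encard_coe_eq_coe_finsetCard, coe_filter]
    congr 1
    ext a
    simp [I, A, and_comm]
  have hfiber := card_eq_sum_card_fiberwise (f := c) (s := A) (t := univ) (by simp)
  rw [Fintype.sum_option] at hfiber
  have hnone : 0 < (A.filter (c · = none)).card :=
    card_pos.2 ⟨x, mem_filter.2 ⟨mem_filter.2 ⟨hxE, .refl⟩, hx⟩⟩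
  refine ⟨A, filter_subset _ _, ?_⟩
  rw [← Finset.card_univ, ← nsmul_eq_mul, ← Finset.sum_const, sum_congr rfl fun i _ ↦ hrk i]
  exact_mod_cast (by omega : ∑ i, (A.filter (c · = some i)).card < A.card)

lemma exists_coloring_of_card_le_eRk [Fintype ι] (E : Finset α) (hE : (E : Set α) ⊆ M.E)
    (h : ∀ S ⊆ E, (S.card : ℕ∞) ≤ Fintype.card ι * M.eRk S) :
    ∃ c : α → Option ι, (∀ i, M.Indep (c ⁻¹' {some i})) ∧ ∀ a, c a ≠ none ↔ a ∈ E := by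
  classical
  induction E using Finset.induction_on with
  | empty => exact ⟨fun _ ↦ none, fun i ↦ by simp, by simp⟩
  | @insert x E hxE ih =>
  obtain ⟨c, hc, hcE⟩ := ih ((coe_subset.2 (subset_insert x E)).trans hE)
    fun S hS ↦ h S (hS.trans (subset_insert x E))
  have hx : c x = none := not_not.1 ((hcE x).not.2 hxE)
  by_cases hreach : ∃ n, M.ReachesAddableIn (fun i ↦ c ⁻¹' {some i}) n x
  · obtain ⟨n, hn⟩ := hreach
    obtain ⟨c', hc', hcol⟩ := exists_extend_coloring_of_reachesAddableIn hc hx hn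
    exact ⟨c', hc', fun a ↦ by rw [hcol, hcE, mem_insert]⟩
  obtain ⟨S, hS, hlt⟩ := exists_eRk_lt_of_forall_not_reachesAddableIn hc hE
    (fun a ha ↦ mem_insert_of_mem ((hcE a).1 ha)) (mem_insert_self x E) hx (not_exists.1 hreach)
  exact absurd (h S hS) hlt.not_ge

theorem exists_partition_indep_of_card_le_eRk [DecidableEq α] [Fintype ι]
    (E : Finset α) (hE : (E : Set α) ⊆ M.E)
    (h : ∀ S ⊆ E, (S.card : ℕ∞) ≤ Fintype.card ι * M.eRk S) :
    ∃ F : ι → Finset α, (∀ i, M.Indep (F i)) ∧ (∀ i j, i ≠ j → Disjoint (F i) (F j)) ∧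
      univ.biUnion F = E := by
  classical
  obtain ⟨c, hc, hcE⟩ := exists_coloring_of_card_le_eRk E hE h
  refine ⟨fun i ↦ E.filter (c · = some i), fun i ↦ (hc i).subset ?_, fun i j hij ↦ ?_, ?_⟩
  · simp only [coe_filter]
    exact fun a ha ↦ ha.2
  · exact disjoint_filter.2 fun a _ hai haj ↦ hij (Option.some_injective _ (hai.symm.trans haj))
  · ext a
    simp only [mem_biUnion, mem_univ, mem_filter, true_and]
    refine ⟨fun ⟨_, ha, _⟩ ↦ ha, fun ha ↦ ?_⟩
    obtain ⟨i, hi⟩ := Option.ne_none_iff_exists'.1 ((hcE a).2 ha)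
    exact ⟨i, ha, hi⟩

end Matroid

namespace Hyperforest

variable [DecidableEq V] {edge : α → Finset V} {F G : Finset α} {X Y : Finset V}

def IsAcyclic (edge : α → Finset V) (F : Finset α) : Prop :=
  ∀ X : Finset V, X.Nonempty → (restrict edge F X).card < X.card

def IsTight (edge : α → Finset V) (F : Finset α) (X : Finset V) : Prop :=
  X.Nonempty ∧ (restrict edge F X).card + 1 = X.card

lemma mem_restrict {e : α} : e ∈ restrict edge F X ↔ e ∈ F ∧ edge e ⊆ X := mem_filter

lemma restrict_mono (hFG : F ⊆ G) (hXY : X ⊆ Y) : restrict edge F X ⊆ restrict edge G Y :=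
  fun _ he ↦ mem_restrict.2 ⟨hFG (mem_restrict.1 he).1, (mem_restrict.1 he).2.trans hXY⟩

lemma isAcyclic_empty : IsAcyclic edge (∅ : Finset α) :=
  fun X hX ↦ by simpa [_root_.restrict] using hX

lemma IsAcyclic.mono (hG : IsAcyclic edge G) (hFG : F ⊆ G) : IsAcyclic edge F :=
  fun X hX ↦ (card_le_card (restrict_mono hFG le_rfl)).trans_lt (hG X hX)

lemma IsAcyclic.disjoint_restrict (hF : IsAcyclic edge F) (hX : X.Nonempty) (hXY : Disjoint X Y) :
    Disjoint (restrict edge F X) (restrict edge F Y) := by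
  refine disjoint_left.2 fun e heX heY ↦ ?_
  obtain ⟨v, -⟩ := hX
  have hempty : edge e = ∅ :=
    disjoint_self.1 <| hXY.mono (mem_restrict.1 heX).2 (mem_restrict.1 heY).2
  have hev : e ∈ restrict edge F {v} := mem_restrict.2 ⟨(mem_restrict.1 heX).1, by simp [hempty]⟩
  have hv := hF {v} (singleton_nonempty v)
  rw [card_singleton, Nat.lt_one_iff, card_eq_zero] at hv
  exact notMem_empty e (hv ▸ hev)

variable [DecidableEq α]

lemma restrict_insert (a : α) (F : Finset α) (X : Finset V) :
    restrict edge (insert a F) X =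
      if edge a ⊆ X then insert a (restrict edge F X) else restrict edge F X :=
  filter_insert _ _ _

lemma card_restrict_add_card_restrict_le (F : Finset α) (X Y : Finset V) :
    (restrict edge F X).card + (restrict edge F Y).card ≤
      (restrict edge F (X ∪ Y)).card + (restrict edge F (X ∩ Y)).card := by
  have hinter : restrict edge F X ∩ restrict edge F Y = restrict edge F (X ∩ Y) := by
    ext e; simp only [mem_inter, mem_restrict, subset_inter_iff]; tauto
  have hunion : restrict edge F X ∪ restrict edge F Y ⊆ restrict edge F (X ∪ Y) :=
    union_subset (restrict_mono le_rfl subset_union_left) (restrict_mono le_rfl subset_union_right)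
  rw [← card_union_add_card_inter, hinter]
  exact Nat.add_le_add_right (card_le_card hunion) _

lemma IsTight.union (hF : IsAcyclic edge F) (hX : IsTight edge F X) (hY : IsTight edge F Y)
    (hXY : (X ∩ Y).Nonempty) : IsTight edge F (X ∪ Y) := by
  obtain ⟨hXne, hXc⟩ := hX
  obtain ⟨-, hYc⟩ := hY
  have hU := hF (X ∪ Y) (hXne.mono subset_union_left)
  have hI := hF (X ∩ Y) hXY
  have := card_restrict_add_card_restrict_le (edge := edge) F X Y
  have := card_union_add_card_inter X Y
  exact ⟨hXne.mono subset_union_left, by omega⟩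

lemma IsAcyclic.exists_isTight_of_not_isAcyclic_insert (hF : IsAcyclic edge F) {a : α}
    (ha : ¬ IsAcyclic edge (insert a F)) : ∃ X, IsTight edge F X ∧ edge a ⊆ X := by
  simp only [IsAcyclic, not_forall, not_lt] at ha
  obtain ⟨X, hX, hcard⟩ := ha
  have hFX := hF X hX
  by_cases haX : edge a ⊆ X
  · rw [restrict_insert, if_pos haX] at hcard
    have := card_insert_le a (restrict edge F X)
    exact ⟨X, ⟨hX, by omega⟩, haX⟩
  · rw [restrict_insert, if_neg haX] at hcard
    exact absurd hFX (not_lt.2 hcard)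

lemma card_restrict_biUnion_le {ι : Type*} [Fintype ι] {E : Finset α} {F : ι → Finset α}
    (hF : ∀ i, IsHyperforest edge E (F i)) (hX : X.Nonempty) :
    (restrict edge (univ.biUnion F) X).card ≤ Fintype.card ι * (X.card - 1) :=
  calc (restrict edge (univ.biUnion F) X).card
      = (univ.biUnion fun i ↦ restrict edge (F i) X).card := by
        rw [_root_.restrict, filter_biUnion]; rfl
    _ ≤ ∑ i, (restrict edge (F i) X).card := card_biUnion_le
    _ ≤ ∑ _i : ι, (X.card - 1) := sum_le_sum fun i _ ↦ (hF i).2 X hX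
    _ = Fintype.card ι * (X.card - 1) := by simp

variable [Fintype V]

/-- The maximal tight sets: two of them that meet are equal by `IsTight.union`. -/
lemma exists_isTight_cover (hF : IsAcyclic edge F) :
    ∃ T : Finset (Finset V), (∀ X ∈ T, IsTight edge F X) ∧
      (T : Set (Finset V)).PairwiseDisjoint id ∧ ∀ Y, IsTight edge F Y → ∃ X ∈ T, Y ⊆ X := by
  classical
  refine ⟨univ.filter (Maximal (IsTight edge F)), fun X hX ↦ (mem_filter.1 hX).2.prop,
    fun X hX Y hY hne ↦ ?_, fun Y hY ↦ ?_⟩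
  · have hX := (mem_filter.1 hX).2
    have hY := (mem_filter.1 hY).2
    by_contra hXY
    rw [Function.onFun, id, id, not_disjoint_iff_nonempty_inter] at hXY
    have hU := hX.prop.union hF hY.prop hXY
    exact hne ((hX.eq_of_le hU subset_union_left).trans
      (hY.eq_of_le hU subset_union_right).symm)
  · obtain ⟨X, hYX, hX⟩ := Finite.exists_le_maximal hY
    exact ⟨X, mem_filter.2 ⟨mem_univ X, hX⟩, hYX⟩

lemma IsAcyclic.card_le_mul_card {k : ℕ} (hk : 0 < k) {A : Finset α} (hF : IsAcyclic edge F)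
    (hA : ∀ X : Finset V, X.Nonempty → (restrict edge A X).card ≤ k * (X.card - 1))
    (hcover : ∀ a ∈ A, a ∉ F → ∃ X, IsTight edge F X ∧ edge a ⊆ X) : A.card ≤ k * F.card := by
  obtain ⟨T, hT, hTdisj, hTmax⟩ := exists_isTight_cover hF
  set U := T.biUnion (restrict edge A)
  set W := T.biUnion (restrict edge F)
  have hW : W.card = ∑ X ∈ T, (restrict edge F X).card :=
    card_biUnion fun X hX Y hY hXY ↦ hF.disjoint_restrict (hT X hX).1 (hTdisj hX hY hXY)
  have hU : U.card ≤ k * W.card := calc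
    U.card ≤ ∑ X ∈ T, (restrict edge A X).card := card_biUnion_le
    _ ≤ ∑ X ∈ T, k * (restrict edge F X).card := sum_le_sum fun X hX ↦
        (hA X (hT X hX).1).trans_eq (by rw [← (hT X hX).2, Nat.add_sub_cancel])
    _ = k * W.card := by rw [hW, mul_sum]
  have hAU : A \ U ⊆ F \ W := by
    intro a ha
    obtain ⟨haA, haU⟩ := mem_sdiff.1 ha
    have haF : a ∈ F := by
      by_contra haF
      obtain ⟨Y, hY, haY⟩ := hcover a haA haF
      obtain ⟨X, hXT, hYX⟩ := hTmax Y hY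
      exact haU (mem_biUnion.2 ⟨X, hXT, mem_restrict.2 ⟨haA, haY.trans hYX⟩⟩)
    refine mem_sdiff.2 ⟨haF, fun haW ↦ haU ?_⟩
    obtain ⟨X, hXT, haX⟩ := mem_biUnion.1 haW
    exact mem_biUnion.2 ⟨X, hXT, mem_restrict.2 ⟨haA, (mem_restrict.1 haX).2⟩⟩
  have hWF : W ⊆ F := biUnion_subset.2 fun X _ ↦ filter_subset _ _
  calc A.card ≤ (A \ U).card + U.card := card_le_card_sdiff_add_card
    _ ≤ (F \ W).card + k * W.card := add_le_add (card_le_card hAU) hU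
    _ ≤ k * (F \ W).card + k * W.card := by gcongr; exact Nat.le_mul_of_pos_left _ hk
    _ = k * F.card := by rw [← mul_add, card_sdiff_add_card_eq_card hWF]

lemma IsAcyclic.exists_insert_of_card_lt {J : Finset α} (hF : IsAcyclic edge F)
    (hJ : IsAcyclic edge J) (hFJ : F.card < J.card) :
    ∃ a ∈ J, a ∉ F ∧ IsAcyclic edge (insert a F) := by
  by_contra! h
  have := hF.card_le_mul_card one_pos (fun X hX ↦ by have := hJ X hX; omega)
    fun a haJ haF ↦ hF.exists_isTight_of_not_isAcyclic_insert (h a haJ haF)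
  omega

noncomputable def matroid (edge : α → Finset V) : Matroid α :=
  (IndepMatroid.ofFinset Set.univ (IsAcyclic edge) isAcyclic_empty (fun _ _ hJ hIJ ↦ hJ.mono hIJ)
    (fun _ _ ↦ IsAcyclic.exists_insert_of_card_lt) fun _ _ ↦ Set.subset_univ _).matroid

@[simp]
lemma matroid_indep_iff : (matroid edge).Indep F ↔ IsAcyclic edge F := by
  simp [matroid]

lemma card_le_mul_eRk_matroid {k : ℕ} (hk : 0 < k) {E S : Finset α}
    (hE : ∀ X : Finset V, X.Nonempty → (restrict edge E X).card ≤ k * (X.card - 1))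
    (hS : S ⊆ E) : (S.card : ℕ∞) ≤ k * (matroid edge).eRk S := by
  obtain ⟨B, hB⟩ :=
    ((matroid edge).isRkFinite_of_finite S.finite_toSet).exists_finset_isBasis'
  have hBacyc := matroid_indep_iff.1 hB.indep
  rw [hB.eRk_eq_encard, Set.encard_coe_eq_coe_finsetCard]
  norm_cast
  refine hBacyc.card_le_mul_card hk
    (fun X hX ↦ (card_le_card (restrict_mono hS le_rfl)).trans (hE X hX)) fun a haS haB ↦ ?_
  refine hBacyc.exists_isTight_of_not_isAcyclic_insert ?_
  rw [← matroid_indep_iff, coe_insert]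
  exact hB.insert_not_indep ⟨haS, haB⟩

end Hyperforest

theorem arboricity_characterization_general [Fintype V] [DecidableEq V] [DecidableEq α]
    (edge : α → Finset V) (E : Finset α)
    (k : ℕ) (hk : 0 < k) :
    (∃ F : Fin k → Finset α, (∀ i, IsHyperforest edge E (F i)) ∧
        (∀ i j, i ≠ j → Disjoint (F i) (F j)) ∧
        Finset.univ.biUnion F = E) ↔
      ∀ X : Finset V, X.Nonempty → (restrict edge E X).card ≤ k * (X.card - 1) := by
  constructor
  · rintro ⟨F, hF, -, rfl⟩ X hX
    simpa using Hyperforest.card_restrict_biUnion_le hF hX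
  · intro hE
    obtain ⟨F, hF, hdisj, hcov⟩ :=
      (Hyperforest.matroid edge).exists_partition_indep_of_card_le_eRk (ι := Fin k) E
        (Set.subset_univ _) fun S hS ↦ by
          simpa using Hyperforest.card_le_mul_eRk_matroid hk hE hS
    refine ⟨F, fun i ↦ ⟨hcov ▸ subset_biUnion_of_mem F (mem_univ i), fun X hX ↦ ?_⟩, hdisj, hcov⟩
    have := Hyperforest.matroid_indep_iff.1 (hF i) X hX
    omega

/-- `E` can be partitioned into `k` pairwise disjoint hyperforests iff
`|E[X]| ≤ k (|X| - 1)` for every nonempty `X ⊆ V`. -/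
theorem arboricity_characterization [Fintype V] [DecidableEq V] [DecidableEq α]
    (edge : α → Finset V) (E : Finset α)
    (hV : 1 ≤ Fintype.card V) (hE : ∀ e ∈ E, 2 ≤ (edge e).card)
    (k : ℕ) (hk : 0 < k) :
    (∃ F : Fin k → Finset α, (∀ i, IsHyperforest edge E (F i)) ∧
        (∀ i j, i ≠ j → Disjoint (F i) (F j)) ∧
        Finset.univ.biUnion F = E) ↔
      ∀ X : Finset V, X.Nonempty → (restrict edge E X).card ≤ k * (X.card - 1) :=
  arboricity_characterization_general edge E k hk
end

section
/- Let H = (V, E) be a hypergraph and let x̄ ∈ ℝ^E satisfy 0 ≤ x̄(e) ≤ 1 for all e ∈ E. Suppose there exist S ⊆ E and a partition 𝒫 of V into nonempty parts such that x̄(S) > |V| − |𝒫| + |δ_S(𝒫)|. Then there exists a nonempty W ⊆ V with x̄(E[W]) > |W| − 1. -/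
open Finset

variable {V α : Type*}

/-- if `0 ≤ x̄ ≤ 1` and some rank inequality is violated, i.e.
`x̄(S) > |V| - |Ps| + |δ_S(Ps)|` for some `S ⊆ E` and partition `Ps` of `V`,
then `x̄(E[W]) > |W| - 1` for some nonempty `W ⊆ V`. -/
theorem violated_rank_gives_violated_set [Fintype V] [DecidableEq V] [DecidableEq α]
    (edge : α → Finset V) (E : Finset α)
    (hV : 1 ≤ Fintype.card V) (hE : ∀ e ∈ E, 2 ≤ (edge e).card)
    (x : α → ℝ) (hx : ∀ e ∈ E, 0 ≤ x e ∧ x e ≤ 1)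
    (hviol : ∃ S : Finset α, S ⊆ E ∧ ∃ Ps : Finset (Finset V), IsPartition Ps ∧
      (Fintype.card V : ℝ) - (Ps.card : ℝ) + ((delta edge S Ps).card : ℝ) < ∑ e ∈ S, x e) :
    ∃ W : Finset V, W.Nonempty ∧ (W.card : ℝ) - 1 < ∑ e ∈ restrict edge E W, x e := by
  classical
  obtain ⟨S, hSE, Ps, ⟨hne, hdisj, hsup⟩, hlt⟩ := hviol
  set δ := delta edge S Ps with hδ
  have hcov : ∀ v : V, ∃ P ∈ Ps, v ∈ P := by
    intro v
    have hv : v ∈ Ps.sup id := by rw [hsup]; exact mem_univ v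
    simpa using Finset.mem_sup.mp hv
  have hedne : ∀ e ∈ S, (edge e).Nonempty := fun e he =>
    Finset.card_pos.mp (lt_of_lt_of_le two_pos (hE e (hSE he)))
  have hkey : ∀ e ∈ S \ δ, ∃ P ∈ Ps, edge e ⊆ P := by
    intro e he
    obtain ⟨heS, heδ⟩ := Finset.mem_sdiff.mp he
    have hsubu : edge e ⊆ Ps.sup id := by rw [hsup]; exact subset_univ _
    have hn : ¬ 2 ≤ (Ps.filter fun P => (edge e ∩ P).Nonempty).card := by
      intro h; exact heδ (Finset.mem_filter.mpr ⟨heS, hsubu, h⟩)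
    obtain ⟨v, hv⟩ := hedne e heS
    obtain ⟨P, hP, hvP⟩ := hcov v
    have hPf : P ∈ Ps.filter fun Q => (edge e ∩ Q).Nonempty :=
      Finset.mem_filter.mpr ⟨hP, ⟨v, Finset.mem_inter.mpr ⟨hv, hvP⟩⟩⟩
    refine ⟨P, hP, fun w hw => ?_⟩
    obtain ⟨Q, hQ, hwQ⟩ := hcov w
    have hQf : Q ∈ Ps.filter fun R => (edge e ∩ R).Nonempty :=
      Finset.mem_filter.mpr ⟨hQ, ⟨w, Finset.mem_inter.mpr ⟨hw, hwQ⟩⟩⟩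
    have hQP : Q = P := by
      by_contra hne'
      exact hn (Finset.one_lt_card.mpr ⟨Q, hQf, P, hPf, hne'⟩)
    exact hQP ▸ hwQ
  have hnotδ : ∀ e ∈ S, ∀ P ∈ Ps, edge e ⊆ P → e ∉ δ := by
    intro e heS P hP hsub heδ
    have h2 : 2 ≤ (Ps.filter fun Q => (edge e ∩ Q).Nonempty).card :=
      (Finset.mem_filter.mp heδ).2.2
    have hsubsingle : (Ps.filter fun Q => (edge e ∩ Q).Nonempty) ⊆ {P} := by
      intro Q hQ
      obtain ⟨hQPs, w, hw⟩ := Finset.mem_filter.mp hQ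
      obtain ⟨hwe, hwQ⟩ := Finset.mem_inter.mp hw
      rw [Finset.mem_singleton]
      by_contra hne'
      exact Finset.disjoint_left.mp (hdisj Q hQPs P hP hne') hwQ (hsub hwe)
    have h1 : (Ps.filter fun Q => (edge e ∩ Q).Nonempty).card ≤ 1 := by
      simpa using Finset.card_le_card hsubsingle
    omega
  have hres : ∀ P ∈ Ps, _root_.restrict edge S P = _root_.restrict edge (S \ δ) P := by
    intro P hP
    ext e
    simp only [_root_.restrict, Finset.mem_filter, Finset.mem_sdiff]
    constructor
    · rintro ⟨heS, hsub⟩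
      exact ⟨⟨heS, hnotδ e heS P hP hsub⟩, hsub⟩
    · rintro ⟨⟨heS, _⟩, hsub⟩; exact ⟨heS, hsub⟩
  have hbi : Ps.biUnion (fun P => _root_.restrict edge (S \ δ) P) = S \ δ := by
    ext e
    simp only [Finset.mem_biUnion, _root_.restrict, Finset.mem_filter]
    constructor
    · rintro ⟨P, _, he, _⟩; exact he
    · intro he
      obtain ⟨P, hP, hsub⟩ := hkey e he
      exact ⟨P, hP, he, hsub⟩
  have hdisj2 : Set.PairwiseDisjoint ↑Ps (fun P => _root_.restrict edge (S \ δ) P) := by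
    intro P hP Q hQ hne'
    rw [Function.onFun, Finset.disjoint_left]
    intro e heP heQ
    obtain ⟨heS, hsubP⟩ := Finset.mem_filter.mp heP
    obtain ⟨_, hsubQ⟩ := Finset.mem_filter.mp heQ
    obtain ⟨v, hv⟩ := hedne e (Finset.mem_sdiff.mp heS).1
    exact Finset.disjoint_left.mp (hdisj P hP Q hQ hne') (hsubP hv) (hsubQ hv)
  have hsum1 : ∑ P ∈ Ps, ∑ e ∈ _root_.restrict edge S P, x e = ∑ e ∈ S \ δ, x e := by
    calc ∑ P ∈ Ps, ∑ e ∈ _root_.restrict edge S P, x e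
        = ∑ P ∈ Ps, ∑ e ∈ _root_.restrict edge (S \ δ) P, x e :=
          Finset.sum_congr rfl (fun P hP => by rw [hres P hP])
      _ = ∑ e ∈ Ps.biUnion (fun P => _root_.restrict edge (S \ δ) P), x e :=
          (Finset.sum_biUnion hdisj2).symm
      _ = ∑ e ∈ S \ δ, x e := by rw [hbi]
  have hδsub : δ ⊆ S := Finset.filter_subset _ _
  have hsum2 : ∑ e ∈ S, x e - (δ.card : ℝ) ≤ ∑ e ∈ S \ δ, x e := by
    have hsplit : ∑ e ∈ S \ δ, x e + ∑ e ∈ δ, x e = ∑ e ∈ S, x e :=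
      Finset.sum_sdiff hδsub
    have hδle : ∑ e ∈ δ, x e ≤ (δ.card : ℝ) := by
      calc ∑ e ∈ δ, x e ≤ ∑ _e ∈ δ, (1 : ℝ) :=
            Finset.sum_le_sum (fun e he => (hx e (hSE (hδsub he))).2)
        _ = (δ.card : ℝ) := by simp
    linarith
  have hcards : ∑ P ∈ Ps, P.card = Fintype.card V := by
    rw [← Finset.card_univ, ← hsup, Finset.sup_eq_biUnion]
    exact (Finset.card_biUnion hdisj).symm
  have hsum3 : ∑ P ∈ Ps, ((P.card : ℝ) - 1) = (Fintype.card V : ℝ) - (Ps.card : ℝ) := by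
    rw [Finset.sum_sub_distrib, ← Nat.cast_sum, hcards]
    simp
  have hmain : ∑ P ∈ Ps, ((P.card : ℝ) - 1) < ∑ P ∈ Ps, ∑ e ∈ _root_.restrict edge S P, x e := by
    rw [hsum1, hsum3]
    linarith
  obtain ⟨P, hP, hPlt⟩ := Finset.exists_lt_of_sum_lt hmain
  refine ⟨P, hne P hP, lt_of_lt_of_le hPlt ?_⟩
  apply Finset.sum_le_sum_of_subset_of_nonneg
  · intro e he
    obtain ⟨heS, hsub⟩ := Finset.mem_filter.mp he
    exact Finset.mem_filter.mpr ⟨hSE heS, hsub⟩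
  · intro e he _
    exact (hx e (Finset.mem_filter.mp he).1).1
end

section
/- Let H = (V, E) be a hypergraph, let I ⊆ E be a hyperforest, and let e₀ ∈ E \ I. Then I ∪ {e₀} is a hyperforest if and only if for every F ⊆ I ∪ {e₀} with e₀ ∈ F, the number of vertices covered by F satisfies |⋃_{e∈F} e| ≥ |F| + 1. -/
open Finset

variable {V α : Type*}

/-- for a hyperforest `I` and `e₀ ∈ E \ I`, the set `I ∪ {e₀}` is a
hyperforest iff every `F ⊆ I ∪ {e₀}` containing `e₀` covers at least `|F| + 1` vertices. -/
theorem independence_augmentation_test [Fintype V] [DecidableEq V] [DecidableEq α]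
    (edge : α → Finset V) (E : Finset α)
    (hV : 1 ≤ Fintype.card V) (hE : ∀ e ∈ E, 2 ≤ (edge e).card)
    (I : Finset α) (hI : IsHyperforest edge E I)
    (e₀ : α) (he₀E : e₀ ∈ E) (he₀I : e₀ ∉ I) :
    IsHyperforest edge E (insert e₀ I) ↔
      ∀ F ⊆ insert e₀ I, e₀ ∈ F → F.card + 1 ≤ (F.sup edge).card := by
  obtain ⟨hIE, hIcard⟩ := hI
  constructor
  · rintro ⟨hsub, hcard⟩ F hF he₀F
    have h2 : 2 ≤ (edge e₀).card := hE e₀ he₀E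
    obtain ⟨v, hv⟩ : (edge e₀).Nonempty := Finset.card_pos.mp (by omega)
    have hXne : (F.sup edge).Nonempty := ⟨v, Finset.mem_sup.mpr ⟨e₀, he₀F, hv⟩⟩
    have hFsub : F ⊆ restrict edge (insert e₀ I) (F.sup edge) := fun e he =>
      Finset.mem_filter.mpr ⟨hF he, Finset.le_sup he⟩
    have h1 := hcard (F.sup edge) hXne
    have h2 := Finset.card_le_card hFsub
    have h3 : 1 ≤ (F.sup edge).card := Finset.card_pos.mpr hXne
    omega
  · intro h
    refine ⟨?_, ?_⟩
    · intro e he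
      rcases Finset.mem_insert.mp he with rfl | he'
      · exact he₀E
      · exact hIE he'
    · intro X hX
      by_cases h0 : e₀ ∈ restrict edge (insert e₀ I) X
      · have hF : restrict edge (insert e₀ I) X ⊆ insert e₀ I := Finset.filter_subset _ _
        have h1 := h _ hF h0
        have hXsub : (restrict edge (insert e₀ I) X).sup edge ≤ X :=
          Finset.sup_le fun e he => (Finset.mem_filter.mp he).2
        have h2 := Finset.card_le_card hXsub
        omega
      · have heq : restrict edge (insert e₀ I) X ⊆ restrict edge I X := by
          intro e he
          have hm := Finset.mem_filter.mp he
          refine Finset.mem_filter.mpr ⟨?_, hm.2⟩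
          rcases Finset.mem_insert.mp hm.1 with rfl | he'
          · exact absurd he h0
          · exact he'
        calc (restrict edge (insert e₀ I) X).card
            ≤ (restrict edge I X).card := Finset.card_le_card heq
          _ ≤ X.card - 1 := hIcard X hX
end

section
/- Let H = (V, E) be a hypergraph, let x̄ ∈ ℝ^E with x̄ ≥ 0, let β ≥ 0 be a real number, fix r ∈ V, and define f on nonempty subsets S ⊆ V by f(S) = β + x̄(E[S]) if r ∉ S and f(S) = x̄(E[S]) if r ∈ S. Then f is intersecting supermodular: for all S, T ⊆ V with S ∩ T ≠ ∅, one has f(S ∪ T) + f(S ∩ T) ≥ f(S) + f(T). -/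
open Finset

variable {V α : Type*}

/-- The function `f(S) = β·[r ∉ S] + x̄(E[S])` used in the greedy/uncrossing algorithm. -/
def fAux [DecidableEq V] (edge : α → Finset V) (E : Finset α) (x : α → ℝ) (β : ℝ)
    (r : V) (S : Finset V) : ℝ :=
  (if r ∈ S then 0 else β) + ∑ e ∈ restrict edge E S, x e

/-- `f` is intersecting supermodular. -/
theorem fAux_intersecting_supermodular [Fintype V] [DecidableEq V] [DecidableEq α]
    (edge : α → Finset V) (E : Finset α)
    (hV : 1 ≤ Fintype.card V) (hE : ∀ e ∈ E, 2 ≤ (edge e).card)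
    (x : α → ℝ) (hx : ∀ e ∈ E, 0 ≤ x e) (β : ℝ) (hβ : 0 ≤ β) (r : V) :
    ∀ S T : Finset V, (S ∩ T).Nonempty →
      fAux edge E x β r S + fAux edge E x β r T ≤
        fAux edge E x β r (S ∪ T) + fAux edge E x β r (S ∩ T) := by
  intro S T _
  unfold fAux
  have hβeq : ((if r ∈ S then (0:ℝ) else β) + if r ∈ T then 0 else β)
      = (if r ∈ S ∪ T then 0 else β) + if r ∈ S ∩ T then 0 else β := by
    by_cases hS : r ∈ S <;> by_cases hT : r ∈ T <;>
      simp [hS, hT, Finset.mem_union, Finset.mem_inter]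
  have hsub : restrict edge E S ∪ restrict edge E T ⊆ restrict edge E (S ∪ T) := by
    intro e he
    simp only [_root_.restrict, Finset.mem_union, Finset.mem_filter] at he ⊢
    rcases he with ⟨h1, h2⟩ | ⟨h1, h2⟩
    · exact ⟨h1, h2.trans Finset.subset_union_left⟩
    · exact ⟨h1, h2.trans Finset.subset_union_right⟩
  have hint : restrict edge E S ∩ restrict edge E T = restrict edge E (S ∩ T) := by
    ext e
    simp only [_root_.restrict, Finset.mem_inter, Finset.mem_filter, Finset.subset_inter_iff]
    tauto
  have hsum : ∑ e ∈ restrict edge E S, x e + ∑ e ∈ restrict edge E T, x e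
      = ∑ e ∈ restrict edge E S ∪ restrict edge E T, x e
        + ∑ e ∈ restrict edge E (S ∩ T), x e := by
    rw [← hint, Finset.sum_union_inter]
  have hle : ∑ e ∈ restrict edge E S ∪ restrict edge E T, x e
      ≤ ∑ e ∈ restrict edge E (S ∪ T), x e := by
    apply Finset.sum_le_sum_of_subset_of_nonneg hsub
    intro e he _
    exact hx e ((Finset.filter_subset _ _) he)
  linarith
end
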